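/- arXiv:2306.00592 — 3 statements merged into one kernel-verified Lean document; each statement's English description precedes it below -/
import Mathlib

section
/- The symplectic Fourier transform intertwines twisted convolution as follows: for Schwartz functions a, b on R^{2d}, F_\sigma(a \times b) = a \times (F_\sigma b), where \times denotes the twisted convolution. -/
open MeasureTheory Real SchwartzMap

noncomputable section

/-- Euclidean dot product on `ℝ^d`. -/
def dotp {d : ℕ} (x y : Fin d → ℝ) : ℝ := ∑ j, x j * y j

/-- The standard symplectic form `σ(z,w) = Jz·w` on `ℝ^{2d} = ℝ^d × ℝ^d`. -/
def sympForm {d : ℕ} (z w : (Fin d → ℝ) × (Fin d → ℝ)) : ℝ :=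
  dotp z.2 w.1 - dotp z.1 w.2

/-- Symplectic Fourier transform `F_σ f(ζ) = π^{-d} ∫ e^{-2iσ(ζ,z)} f(z) dz`. -/
def sympFourier {d : ℕ} (f : (Fin d → ℝ) × (Fin d → ℝ) → ℂ)
    (ζ : (Fin d → ℝ) × (Fin d → ℝ)) : ℂ :=
  (((π : ℝ) ^ d)⁻¹ : ℝ) *
    ∫ z : (Fin d → ℝ) × (Fin d → ℝ),
      Complex.exp (-2 * Complex.I * (sympForm ζ z : ℝ)) * f z

/-- Twisted convolution `a × b(z) = π^{-d} ∫ e^{2iσ(z,w)} a(z-w) b(w) dw`. -/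
def twistConv {d : ℕ} (a b : (Fin d → ℝ) × (Fin d → ℝ) → ℂ)
    (z : (Fin d → ℝ) × (Fin d → ℝ)) : ℂ :=
  (((π : ℝ) ^ d)⁻¹ : ℝ) *
    ∫ w : (Fin d → ℝ) × (Fin d → ℝ),
      Complex.exp (2 * Complex.I * (sympForm z w : ℝ)) * a (z - w) * b w

section Aux

variable {d : ℕ}

lemma dotp_add_left (x y z : Fin d → ℝ) : dotp (x + y) z = dotp x z + dotp y z := by
  simp [dotp, add_mul, Finset.sum_add_distrib]

lemma dotp_add_right (x y z : Fin d → ℝ) : dotp x (y + z) = dotp x y + dotp x z := by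
  simp [dotp, mul_add, Finset.sum_add_distrib]

lemma dotp_sub_left (x y z : Fin d → ℝ) : dotp (x - y) z = dotp x z - dotp y z := by
  simp [dotp, sub_mul, Finset.sum_sub_distrib]

lemma dotp_sub_right (x y z : Fin d → ℝ) : dotp x (y - z) = dotp x y - dotp x z := by
  simp [dotp, mul_sub, Finset.sum_sub_distrib]

lemma dotp_comm (x y : Fin d → ℝ) : dotp x y = dotp y x := by
  simp [dotp, mul_comm]

lemma sympForm_add_right (z u w : (Fin d → ℝ) × (Fin d → ℝ)) :
    sympForm z (u + w) = sympForm z u + sympForm z w := by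
  simp [sympForm, dotp_add_left, dotp_add_right]; ring

lemma sympForm_add_left (z u w : (Fin d → ℝ) × (Fin d → ℝ)) :
    sympForm (z + u) w = sympForm z w + sympForm u w := by
  simp [sympForm, dotp_add_left, dotp_add_right]; ring

lemma sympForm_sub_left (z u w : (Fin d → ℝ) × (Fin d → ℝ)) :
    sympForm (z - u) w = sympForm z w - sympForm u w := by
  simp [sympForm, dotp_sub_left, dotp_sub_right]; ring

lemma sympForm_sub_right (z u w : (Fin d → ℝ) × (Fin d → ℝ)) :
    sympForm z (u - w) = sympForm z u - sympForm z w := by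
  simp [sympForm, dotp_sub_left, dotp_sub_right]; ring

lemma sympForm_self (z : (Fin d → ℝ) × (Fin d → ℝ)) : sympForm z z = 0 := by
  simp [sympForm, dotp_comm]

lemma Continuous.dotp2 {X : Type*} [TopologicalSpace X] {f g : X → Fin d → ℝ}
    (hf : Continuous f) (hg : Continuous g) : Continuous fun x => dotp (f x) (g x) := by
  unfold dotp
  exact continuous_finset_sum _ fun j _ =>
    ((continuous_apply j).comp hf).mul ((continuous_apply j).comp hg)

lemma Continuous.sympForm2 {X : Type*} [TopologicalSpace X]
    {f g : X → (Fin d → ℝ) × (Fin d → ℝ)}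
    (hf : Continuous f) (hg : Continuous g) : Continuous fun x => sympForm (f x) (g x) := by
  unfold sympForm
  exact ((continuous_snd.comp hf).dotp2 (continuous_fst.comp hg)).sub
    ((continuous_fst.comp hf).dotp2 (continuous_snd.comp hg))

lemma integrable_phase_mul {α : Type*} [MeasurableSpace α] [TopologicalSpace α]
    [OpensMeasurableSpace α] {μ : Measure α} {φ : α → ℝ} (hφ : Continuous φ)
    {g : α → ℂ} (hg : Integrable g μ) :
    Integrable (fun p => Complex.exp (Complex.I * (φ p : ℂ)) * g p) μ := by
  refine hg.bdd_mul (c := 1) ?_ (Filter.Eventually.of_forall fun p => ?_)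
  · exact (Complex.continuous_exp.comp
      (continuous_const.mul (Complex.continuous_ofReal.comp hφ))).aestronglyMeasurable
  · simp [Complex.norm_exp]

instance vol_haar : (volume : Measure ((Fin d → ℝ) × (Fin d → ℝ))).IsAddHaarMeasure := by
  rw [Measure.volume_eq_prod]; exact Measure.prod.instIsAddHaarMeasure _ _

instance vol_neg : (volume : Measure ((Fin d → ℝ) × (Fin d → ℝ))).IsNegInvariant := by
  constructor
  have h : MeasurePreserving (Neg.neg : ((Fin d → ℝ) × (Fin d → ℝ)) → _) volume volume := by
    rw [Measure.volume_eq_prod]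
    exact (Measure.measurePreserving_neg volume).prod (Measure.measurePreserving_neg volume)
  exact h.map_eq

end Aux

/-- `F_σ(a × b) = a × (F_σ b)` for Schwartz functions `a, b` on `ℝ^{2d}`. -/
theorem sympFourier_twistConv {d : ℕ}
    (a b : 𝓢((Fin d → ℝ) × (Fin d → ℝ), ℂ)) :
    sympFourier (twistConv (⇑a) (⇑b)) = twistConv (⇑a) (sympFourier (⇑b)) := by
  funext ζ
  have hπ : ((π : ℂ)) ^ d ≠ 0 := pow_ne_zero d (by exact_mod_cast pi_ne_zero)
  have hcπ : ((((π : ℝ) ^ d)⁻¹ : ℝ) : ℂ) * (((π ^ d : ℝ)) : ℂ) = 1 := by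
    push_cast
    exact inv_mul_cancel₀ hπ
  set c : ℂ := ((((π : ℝ) ^ d)⁻¹ : ℝ) : ℂ) with hc
  set Fb : ((Fin d → ℝ) × (Fin d → ℝ)) → ℂ := sympFourier (⇑b) with hFb
  set G : ((Fin d → ℝ) × (Fin d → ℝ)) → ℂ :=
    fun u => Complex.exp (-2 * Complex.I * (sympForm ζ u : ℝ)) * a u with hG
  set F : ((Fin d → ℝ) × (Fin d → ℝ)) → ((Fin d → ℝ) × (Fin d → ℝ)) → ℂ :=
    fun z w => Complex.exp (-2 * Complex.I * (sympForm ζ z : ℝ)) *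
      (Complex.exp (2 * Complex.I * (sympForm z w : ℝ)) * a (z - w) * b w) with hF
  set K : ((Fin d → ℝ) × (Fin d → ℝ)) → ((Fin d → ℝ) × (Fin d → ℝ)) → ℂ :=
    fun w u => Complex.exp (-2 * Complex.I * (sympForm (ζ - u) w : ℝ)) * b w with hK
  -- integrability facts
  have hab : Integrable
      (fun p : ((Fin d → ℝ) × (Fin d → ℝ)) × ((Fin d → ℝ) × (Fin d → ℝ)) =>
        (a (p.1 - p.2) : ℂ) * b p.2) (volume.prod volume) := by
    have h1 : Integrable
        (fun p : ((Fin d → ℝ) × (Fin d → ℝ)) × ((Fin d → ℝ) × (Fin d → ℝ)) =>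
          (a p.1 : ℂ) * b p.2) (volume.prod volume) :=
      a.integrable.mul_prod b.integrable
    have h2 := ((measurePreserving_sub_prod
        (volume : Measure ((Fin d → ℝ) × (Fin d → ℝ))) volume).integrable_comp
        h1.aestronglyMeasurable).mpr h1
    simpa [Function.comp_def] using h2
  have hba : Integrable
      (fun p : ((Fin d → ℝ) × (Fin d → ℝ)) × ((Fin d → ℝ) × (Fin d → ℝ)) =>
        (a p.2 : ℂ) * b p.1) (volume.prod volume) := by
    have h1 : Integrable
        (fun p : ((Fin d → ℝ) × (Fin d → ℝ)) × ((Fin d → ℝ) × (Fin d → ℝ)) =>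
          (b p.1 : ℂ) * a p.2) (volume.prod volume) :=
      b.integrable.mul_prod a.integrable
    simpa [mul_comm] using h1
  have hInt1 : Integrable (Function.uncurry F) (volume.prod volume) := by
    have hφ : Continuous fun p : ((Fin d → ℝ) × (Fin d → ℝ)) × ((Fin d → ℝ) × (Fin d → ℝ)) =>
        -2 * sympForm ζ p.1 + 2 * sympForm p.1 p.2 :=
      (continuous_const.mul (Continuous.sympForm2 continuous_const continuous_fst)).add
        (continuous_const.mul (Continuous.sympForm2 continuous_fst continuous_snd))
    refine (integrable_phase_mul hφ hab).congr
      (Filter.Eventually.of_forall fun p => ?_)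
    simp only [Function.uncurry, hF]
    have : Complex.exp (Complex.I * ((-2 * sympForm ζ p.1 + 2 * sympForm p.1 p.2 : ℝ) : ℂ))
        = Complex.exp (-2 * Complex.I * (sympForm ζ p.1 : ℝ)) *
          Complex.exp (2 * Complex.I * (sympForm p.1 p.2 : ℝ)) := by
      rw [← Complex.exp_add]; congr 1; push_cast; ring
    rw [this]; ring
  have hInt2 : Integrable (Function.uncurry fun w u => G u * K w u) (volume.prod volume) := by
    have hφ : Continuous fun p : ((Fin d → ℝ) × (Fin d → ℝ)) × ((Fin d → ℝ) × (Fin d → ℝ)) =>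
        -2 * sympForm ζ p.2 + -2 * sympForm (ζ - p.2) p.1 :=
      (continuous_const.mul (Continuous.sympForm2 continuous_const continuous_snd)).add
        (continuous_const.mul
          (Continuous.sympForm2 (continuous_const.sub continuous_snd) continuous_fst))
    refine (integrable_phase_mul hφ hba).congr
      (Filter.Eventually.of_forall fun p => ?_)
    simp only [Function.uncurry, hG, hK]
    have : Complex.exp (Complex.I *
          ((-2 * sympForm ζ p.2 + -2 * sympForm (ζ - p.2) p.1 : ℝ) : ℂ))
        = Complex.exp (-2 * Complex.I * (sympForm ζ p.2 : ℝ)) *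
          Complex.exp (-2 * Complex.I * (sympForm (ζ - p.2) p.1 : ℝ)) := by
      rw [← Complex.exp_add]; congr 1; push_cast; ring
    rw [this]; ring
  -- Step 1: unfold LHS and pull out constants
  have key1 : sympFourier (twistConv (⇑a) (⇑b)) ζ
      = c * (c * ∫ z : (Fin d → ℝ) × (Fin d → ℝ),
          ∫ w : (Fin d → ℝ) × (Fin d → ℝ), F z w) := by
    rw [sympFourier, ← hc]
    congr 1
    calc (∫ z : (Fin d → ℝ) × (Fin d → ℝ),
            Complex.exp (-2 * Complex.I * (sympForm ζ z : ℝ)) * twistConv (⇑a) (⇑b) z)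
        = ∫ z : (Fin d → ℝ) × (Fin d → ℝ), c * ∫ w : (Fin d → ℝ) × (Fin d → ℝ), F z w := by
          refine integral_congr_ae (Filter.Eventually.of_forall fun z => ?_)
          simp only [twistConv]
          rw [← hc, mul_left_comm]
          congr 1
          rw [← integral_const_mul]
      _ = c * ∫ z : (Fin d → ℝ) × (Fin d → ℝ), ∫ w : (Fin d → ℝ) × (Fin d → ℝ), F z w :=
          integral_const_mul c _
  -- Step 2: Fubini
  have key2 : (∫ z : (Fin d → ℝ) × (Fin d → ℝ), ∫ w : (Fin d → ℝ) × (Fin d → ℝ), F z w)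
      = ∫ w : (Fin d → ℝ) × (Fin d → ℝ), ∫ z : (Fin d → ℝ) × (Fin d → ℝ), F z w :=
    integral_integral_swap hInt1
  -- Step 3: translation z ↦ z + w in the inner integral
  have key3 : ∀ w : (Fin d → ℝ) × (Fin d → ℝ),
      (∫ z : (Fin d → ℝ) × (Fin d → ℝ), F z w)
        = ∫ u : (Fin d → ℝ) × (Fin d → ℝ), G u * K w u := by
    intro w
    rw [← integral_add_right_eq_self (fun z => F z w) w]
    congr 1
    funext u
    simp only [hF, hG, hK, add_sub_cancel_right]
    have : Complex.exp (-2 * Complex.I * (sympForm ζ (u + w) : ℝ)) *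
          Complex.exp (2 * Complex.I * (sympForm (u + w) w : ℝ))
        = Complex.exp (-2 * Complex.I * (sympForm ζ u : ℝ)) *
          Complex.exp (-2 * Complex.I * (sympForm (ζ - u) w : ℝ)) := by
      rw [← Complex.exp_add, ← Complex.exp_add]
      congr 1
      push_cast [sympForm_add_right, sympForm_add_left, sympForm_sub_left, sympForm_self]
      ring
    calc Complex.exp (-2 * Complex.I * (sympForm ζ (u + w) : ℝ)) *
          (Complex.exp (2 * Complex.I * (sympForm (u + w) w : ℝ)) * a u * b w)
        = (Complex.exp (-2 * Complex.I * (sympForm ζ (u + w) : ℝ)) *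
            Complex.exp (2 * Complex.I * (sympForm (u + w) w : ℝ))) * (a u * b w) := by ring
      _ = (Complex.exp (-2 * Complex.I * (sympForm ζ u : ℝ)) *
            Complex.exp (-2 * Complex.I * (sympForm (ζ - u) w : ℝ))) * (a u * b w) := by
          rw [this]
      _ = (Complex.exp (-2 * Complex.I * (sympForm ζ u : ℝ)) * a u) *
            (Complex.exp (-2 * Complex.I * (sympForm (ζ - u) w : ℝ)) * b w) := by ring
  -- Step 4: Fubini back
  have key4 : (∫ w : (Fin d → ℝ) × (Fin d → ℝ), ∫ u : (Fin d → ℝ) × (Fin d → ℝ), G u * K w u)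
      = ∫ u : (Fin d → ℝ) × (Fin d → ℝ), ∫ w : (Fin d → ℝ) × (Fin d → ℝ), G u * K w u :=
    integral_integral_swap hInt2
  -- Step 5: the inner integral is the symplectic Fourier transform of b
  have key5 : ∀ u : (Fin d → ℝ) × (Fin d → ℝ),
      (∫ w : (Fin d → ℝ) × (Fin d → ℝ), G u * K w u)
        = (((π ^ d : ℝ)) : ℂ) * (G u * Fb (ζ - u)) := by
    intro u
    rw [integral_const_mul]
    have hFbv : Fb (ζ - u) = c * ∫ w : (Fin d → ℝ) × (Fin d → ℝ),
        Complex.exp (-2 * Complex.I * (sympForm (ζ - u) w : ℝ)) * b w := by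
      rw [hFb, sympFourier, ← hc]
    rw [hFbv]
    simp only [hK]
    rw [← mul_assoc ((((π ^ d : ℝ)) : ℂ)) (G u) _, mul_comm ((((π ^ d : ℝ)) : ℂ)) (G u),
      mul_assoc (G u) _ _, ← mul_assoc ((((π ^ d : ℝ)) : ℂ)) c _,
      mul_comm ((((π ^ d : ℝ)) : ℂ)) c, hcπ, one_mul]
  -- Assemble the LHS
  have lhs_eq : sympFourier (twistConv (⇑a) (⇑b)) ζ
      = c * ∫ u : (Fin d → ℝ) × (Fin d → ℝ), G u * Fb (ζ - u) := by
    rw [key1, key2]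
    simp_rw [key3]
    rw [key4]
    simp_rw [key5]
    rw [integral_const_mul]
    congr 1
    rw [← mul_assoc, hcπ, one_mul]
  -- Compute the RHS
  have rhs_eq : twistConv (⇑a) (sympFourier (⇑b)) ζ
      = c * ∫ u : (Fin d → ℝ) × (Fin d → ℝ), G u * Fb (ζ - u) := by
    rw [twistConv, ← hc, ← hFb]
    congr 1
    rw [← integral_sub_left_eq_self
      (fun w => Complex.exp (2 * Complex.I * (sympForm ζ w : ℝ)) * a (ζ - w) * Fb w) volume ζ]
    congr 1
    funext u
    simp only [hG, sub_sub_cancel]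
    have : Complex.exp (2 * Complex.I * (sympForm ζ (ζ - u) : ℝ))
        = Complex.exp (-2 * Complex.I * (sympForm ζ u : ℝ)) := by
      congr 1
      push_cast [sympForm_sub_right, sympForm_self]
      ring
    rw [this]
  rw [lhs_eq, rhs_eq]

end
end

section
/- The twisted heat kernel has the closed form: for t > 0 and z in R^{2d}, (8\pi)^{-d} \sum_{k=0}^\infty e^{-(2k+d)t} L_k^{d-1}(|z|^2/2) e^{-|z|^2/4} = (16\pi \sinh t)^{-d} exp(-\frac{1}{4} \coth(t) |z|^2), with the series converging absolutely. -/
open Real Finset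

noncomputable section

def laguerre (δ n : ℕ) (y : ℝ) : ℝ :=
  ∑ i ∈ Finset.range (n + 1),
    (-1 : ℝ) ^ i * ((n + δ).choose (n - i) : ℝ) * y ^ i / (i.factorial : ℝ)

namespace TH

def F (δ : ℕ) (x r : ℝ) : ℕ × ℕ → ℝ :=
  fun p => (-x) ^ p.1 / (p.1.factorial : ℝ) * (((p.2 + (p.1 + δ)).choose (p.1 + δ) : ℕ) : ℝ)
    * r ^ (p.1 + p.2)

lemma hasSum_row (δ : ℕ) (x : ℝ) {r : ℝ} (hr : |r| < 1) (i : ℕ) :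
    HasSum (fun m => F δ x r (i, m))
      ((-x) ^ i / (i.factorial : ℝ) * r ^ i * (1 / (1 - r) ^ (i + δ + 1))) := by
  have h := (hasSum_choose_mul_geometric_of_norm_lt_one (𝕜 := ℝ) (i + δ)
    (by rwa [Real.norm_eq_abs])).mul_left ((-x) ^ i / (i.factorial : ℝ) * r ^ i)
  have heq : (fun m => F δ x r (i, m)) = fun m : ℕ =>
      (-x) ^ i / (i.factorial : ℝ) * r ^ i *
        ((((m + (i + δ)).choose (i + δ) : ℕ) : ℝ) * r ^ m) := by
    funext m; simp only [F, pow_add]; ring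
  exact heq ▸ h

lemma hasSum_rows (δ : ℕ) (x : ℝ) {r : ℝ} (hr0 : 0 ≤ r) (hr1 : r < 1) :
    HasSum (fun i : ℕ => (-x) ^ i / (i.factorial : ℝ) * r ^ i * (1 / (1 - r) ^ (i + δ + 1)))
      ((1 / (1 - r) ^ (δ + 1)) * Real.exp (-x * r / (1 - r))) := by
  have h1r : (1 : ℝ) - r ≠ 0 := by linarith
  have h := (NormedSpace.expSeries_div_hasSum_exp (𝔸 := ℝ) (-x * r / (1 - r))).mul_left
    (1 / (1 - r) ^ (δ + 1))
  rw [← Real.exp_eq_exp_ℝ] at h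
  convert h using 2 with i
  case e'_3 => rfl
  have hfac : ((i.factorial : ℝ)) ≠ 0 := Nat.cast_ne_zero.mpr i.factorial_ne_zero
  rw [div_pow, pow_add]
  field_simp
  ring

lemma abs_F (δ : ℕ) {x r : ℝ} (hx : 0 ≤ x) (hr0 : 0 ≤ r) (p : ℕ × ℕ) :
    |F δ x r p| = F δ (-x) r p := by
  simp only [F, neg_neg, abs_mul, abs_div, abs_pow, abs_neg, abs_of_nonneg hx,
    abs_of_nonneg hr0, Nat.abs_cast]

lemma summable_abs_F (δ : ℕ) {x r : ℝ} (hx : 0 ≤ x) (hr0 : 0 ≤ r) (hr1 : r < 1) :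
    Summable fun p => |F δ x r p| := by
  have habs : |r| < 1 := by rw [abs_of_nonneg hr0]; exact hr1
  have hfun : (fun p => |F δ x r p|) = F δ (-x) r := funext (abs_F δ hx hr0)
  rw [hfun]
  rw [summable_prod_of_nonneg ?hnn]
  case hnn =>
    intro p
    rw [← abs_F δ hx hr0 p]
    exact abs_nonneg _
  constructor
  · exact fun i => (hasSum_row δ (-x) habs i).summable
  · have : (fun i => ∑' m, F δ (-x) r (i, m)) =
        fun i : ℕ => (x : ℝ) ^ i / (i.factorial : ℝ) * r ^ i * (1 / (1 - r) ^ (i + δ + 1)) := by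
      funext i
      rw [(hasSum_row δ (-x) habs i).tsum_eq, neg_neg]
    rw [this]
    have h := (hasSum_rows δ (-x) hr0 hr1).summable
    simpa using h

lemma antidiagonal_sum (δ k : ℕ) (x r : ℝ) :
    ∑ p ∈ Finset.HasAntidiagonal.antidiagonal k, F δ x r p = laguerre δ k x * r ^ k := by
  rw [show (∑ p ∈ Finset.HasAntidiagonal.antidiagonal k, F δ x r p) =
      ∑ p ∈ Finset.HasAntidiagonal.antidiagonal k, (fun i m => F δ x r (i, m)) p.1 p.2 from rfl,
    Finset.Nat.sum_antidiagonal_eq_sum_range_succ (fun i m => F δ x r (i, m)) k,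
    laguerre, Finset.sum_mul]
  refine Finset.sum_congr rfl fun i hi => ?_
  rw [Finset.mem_range] at hi
  have hik : i ≤ k := Nat.lt_succ_iff.mp hi
  have h1 : k - i + (i + δ) = k + δ := by omega
  have h2 : (k + δ).choose (k - i) = (k + δ).choose (i + δ) := by
    rw [show k - i = k + δ - (i + δ) by omega]
    exact Nat.choose_symm (by omega)
  simp only [F, h1, h2, show i + (k - i) = k by omega]
  rw [neg_pow]
  ring

set_option maxHeartbeats 1000000 in
lemma gen (δ : ℕ) {x r : ℝ} (hx : 0 ≤ x) (hr0 : 0 ≤ r) (hr1 : r < 1) :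
    (Summable fun k => |laguerre δ k x * r ^ k|) ∧
    ∑' k, laguerre δ k x * r ^ k
      = (1 / (1 - r) ^ (δ + 1)) * Real.exp (-x * r / (1 - r)) := by
  have habs : |r| < 1 := by rw [abs_of_nonneg hr0]; exact hr1
  have hA : Summable fun p => |F δ x r p| := summable_abs_F δ hx hr0 hr1
  have hF : Summable (F δ x r) := hA.of_abs
  set e := Finset.HasAntidiagonal.sigmaAntidiagonalEquivProd (A := ℕ) with he
  -- summability over the sigma type
  have hFe : Summable fun s : Σ n : ℕ, Finset.HasAntidiagonal.antidiagonal n => F δ x r (e s) :=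
    e.summable_iff.mpr hF
  have hAe : Summable fun s : Σ n : ℕ, Finset.HasAntidiagonal.antidiagonal n => |F δ x r (e s)| :=
    e.summable_iff.mpr hA
  have hfib : ∀ n : ℕ, (∑' c : Finset.HasAntidiagonal.antidiagonal n, F δ x r (e ⟨n, c⟩))
      = laguerre δ n x * r ^ n := by
    intro n
    rw [tsum_fintype, ← antidiagonal_sum δ n x r,
      ← Finset.sum_finset_coe (fun p => F δ x r p) (Finset.HasAntidiagonal.antidiagonal n)]
    rfl
  have hfibA : ∀ n : ℕ, (∑' c : Finset.HasAntidiagonal.antidiagonal n, |F δ x r (e ⟨n, c⟩)|)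
      = ∑ p ∈ Finset.HasAntidiagonal.antidiagonal n, |F δ x r p| := by
    intro n
    rw [tsum_fintype, ← Finset.sum_finset_coe (fun p => |F δ x r p|) (Finset.HasAntidiagonal.antidiagonal n)]
    rfl
  constructor
  · -- absolute summability
    have hs : Summable fun n : ℕ => ∑ p ∈ Finset.HasAntidiagonal.antidiagonal n, |F δ x r p| := by
      have := hAe.sigma' (fun n => (hasSum_fintype _).summable)
      simpa only [hfibA] using this
    refine hs.of_nonneg_of_le (fun k => abs_nonneg _) fun k => ?_
    rw [← antidiagonal_sum δ k x r]
    exact Finset.abs_sum_le_sum_abs _ _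
  · -- value
    have h1 : ∑' k, laguerre δ k x * r ^ k = ∑' p, F δ x r p := by
      rw [← e.tsum_eq (F δ x r), Summable.tsum_sigma' (fun n => (hasSum_fintype _).summable) hFe]
      exact (tsum_congr hfib).symm
    rw [h1, Summable.tsum_prod' hF fun i => (hasSum_row δ x habs i).summable]
    have h2 : ∀ i : ℕ, ∑' m, F δ x r (i, m)
        = (-x) ^ i / (i.factorial : ℝ) * r ^ i * (1 / (1 - r) ^ (i + δ + 1)) :=
      fun i => (hasSum_row δ x habs i).tsum_eq
    rw [tsum_congr h2]
    exact (hasSum_rows δ x hr0 hr1).tsum_eq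

end TH

/-- Closed form of the twisted heat kernel:
`(8π)^{-d} ∑_k e^{-(2k+d)t} L_k^{d-1}(|z|²/2) e^{-|z|²/4}
  = (16π sinh t)^{-d} e^{-coth(t)|z|²/4}`, with absolute convergence. -/
theorem twisted_heat_kernel {d : ℕ} (hd : 1 ≤ d) (t : ℝ) (ht : 0 < t)
    (z : Fin (2 * d) → ℝ) :
    (Summable fun k : ℕ =>
      |Real.exp (-(2 * (k : ℝ) + d) * t) * laguerre (d - 1) k ((∑ j, z j ^ 2) / 2) *
        Real.exp (-(∑ j, z j ^ 2) / 4)|) ∧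
    ((8 * π : ℝ) ^ d)⁻¹ *
        ∑' k : ℕ,
          Real.exp (-(2 * (k : ℝ) + d) * t) * laguerre (d - 1) k ((∑ j, z j ^ 2) / 2) *
            Real.exp (-(∑ j, z j ^ 2) / 4) =
      ((16 * π * Real.sinh t : ℝ) ^ d)⁻¹ *
        Real.exp (-(1 / 4) * Real.cosh t / Real.sinh t * ∑ j, z j ^ 2) := by
  set S := ∑ j, z j ^ 2 with hSdef
  have hS0 : (0:ℝ) ≤ S := Finset.sum_nonneg fun j _ => sq_nonneg _
  set b := Real.exp (-t) with hbdef
  have hb0 : (0:ℝ) < b := Real.exp_pos _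
  have hb1 : b < 1 := Real.exp_lt_one_iff.mpr (by linarith)
  have hbinv : Real.exp t = b⁻¹ := by rw [hbdef, ← Real.exp_neg, neg_neg]
  set r := b ^ 2 with hrdef
  have hr0 : (0:ℝ) ≤ r := by positivity
  have hr1 : r < 1 := by nlinarith
  have h1mr : (0:ℝ) < 1 - r := by linarith
  have hsinh : 0 < Real.sinh t := Real.sinh_pos_iff.mpr ht
  obtain ⟨hsum, hval⟩ := TH.gen (d - 1) (x := S / 2) (r := r) (by linarith) hr0 hr1
  have hd' : d - 1 + 1 = d := Nat.sub_add_cancel hd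
  rw [hd'] at hval
  have hterm : ∀ k : ℕ,
      Real.exp (-(2 * (k : ℝ) + d) * t) * laguerre (d - 1) k (S / 2) * Real.exp (-S / 4)
        = (Real.exp (-((d:ℝ) * t)) * Real.exp (-S / 4)) * (laguerre (d - 1) k (S / 2) * r ^ k) := by
    intro k
    have h2 : r ^ k = Real.exp ((k:ℝ) * (2 * -t)) := by
      rw [hrdef, hbdef, ← Real.exp_nat_mul, ← Real.exp_nat_mul]
      push_cast; ring_nf
    have h3 : (-(2 * (k : ℝ) + d) * t) = (-((d:ℝ) * t) + (k:ℝ) * (2 * -t)) := by ring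
    rw [h3, Real.exp_add, h2]
    ring
  constructor
  · simp only [hterm]
    simpa only [abs_mul] using
      hsum.mul_left |Real.exp (-((d:ℝ) * t)) * Real.exp (-S / 4)|
  · rw [tsum_congr hterm, tsum_mul_left, hval]
    have hexpd : Real.exp (-((d:ℝ) * t)) = b ^ d := by
      rw [hbdef, ← Real.exp_nat_mul]; ring_nf
    have hmb : (1:ℝ) - b ^ 2 ≠ 0 := by rw [← hrdef]; linarith
    have hπ : (π : ℝ) ≠ 0 := Real.pi_ne_zero
    have hb0' : b ≠ 0 := ne_of_gt hb0
    have h16 : 16 * π * Real.sinh t = 8 * π * (1 - b ^ 2) / b := by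
      rw [Real.sinh_eq, hbinv]
      field_simp
      ring
    have hpre1 : (8 * π)⁻¹ * (b * (1 / (1 - r))) = (16 * π * Real.sinh t)⁻¹ := by
      rw [hrdef, h16]
      field_simp
    have hpre : ((8 * π) ^ d)⁻¹ * (Real.exp (-((d:ℝ) * t)) * (1 / (1 - r) ^ d))
        = ((16 * π * Real.sinh t) ^ d)⁻¹ := by
      calc ((8 * π) ^ d)⁻¹ * (Real.exp (-((d:ℝ) * t)) * (1 / (1 - r) ^ d))
          = ((8 * π)⁻¹ * (b * (1 / (1 - r)))) ^ d := by
            rw [hexpd]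
            rw [mul_pow, mul_pow, mul_pow, inv_pow, one_div, one_div, inv_pow, mul_pow]
        _ = ((16 * π * Real.sinh t)⁻¹) ^ d := by rw [hpre1]
        _ = ((16 * π * Real.sinh t) ^ d)⁻¹ := inv_pow _ _
    have hexp : Real.exp (-S / 4) * Real.exp (-(S / 2) * r / (1 - r))
        = Real.exp (-(1 / 4) * Real.cosh t / Real.sinh t * S) := by
      rw [← Real.exp_add]
      congr 1
      have hsinhb : Real.sinh t = (b⁻¹ - b) / 2 := by rw [Real.sinh_eq, hbinv]
      have hcoshb : Real.cosh t = (b⁻¹ + b) / 2 := by rw [Real.cosh_eq, hbinv]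
      have hbb : (b⁻¹ - b) / 2 ≠ 0 := by rw [← hsinhb]; exact ne_of_gt hsinh
      have hcs : Real.cosh t / Real.sinh t = (1 + r) / (1 - r) := by
        rw [hcoshb, hsinhb, hrdef, div_eq_div_iff hbb hmb]
        field_simp
      rw [show -(1 / 4) * Real.cosh t / Real.sinh t * S
          = -(1 / 4) * (Real.cosh t / Real.sinh t) * S from by ring, hcs]
      field_simp
      ring
    calc ((8 * π : ℝ) ^ d)⁻¹ * (Real.exp (-((d:ℝ) * t)) * Real.exp (-S / 4) *
          (1 / (1 - r) ^ d * Real.exp (-(S / 2) * r / (1 - r))))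
        = (((8 * π) ^ d)⁻¹ * (Real.exp (-((d:ℝ) * t)) * (1 / (1 - r) ^ d))) *
          (Real.exp (-S / 4) * Real.exp (-(S / 2) * r / (1 - r))) := by ring
      _ = ((16 * π * Real.sinh t : ℝ) ^ d)⁻¹ *
          Real.exp (-(1 / 4) * Real.cosh t / Real.sinh t * S) := by rw [hpre, hexp]
end
end

section
/- For 0 < \nu < 1 and s > 0, the \nu-stable subordinator density \eta_t satisfies: for every real exponent a > 0 and t > 0, \int_0^1 s^{-a} \eta_t(s) ds <= \frac{1}{\Gamma(a)} \int_0^\infty e^{-t y^\nu} y^{a-1} dy, and the right-hand side equals \frac{1}{\nu} \Gamma(a/\nu) t^{-a/\nu} up to the Gamma factor, so that \int_0^1 s^{-a} \eta_t(s) ds <= \frac{\Gamma(a/\nu)}{\nu \Gamma(a)} t^{-a/\nu}. -/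
open MeasureTheory Real


lemma aux_int_val {ν a t : ℝ} (hν : 0 < ν) (ha : 0 < a) (ht : 0 < t) :
    ∫ y in Set.Ioi (0:ℝ), Real.exp (-t * y ^ ν) * y ^ (a - 1)
      = ν⁻¹ * Real.Gamma (a / ν) * t ^ (-(a / ν)) := by
  have h := integral_rpow_mul_exp_neg_mul_rpow (p := ν) (q := a - 1) (b := t) hν
    (by linarith) ht
  rw [show a - 1 + 1 = a by ring] at h
  rw [show (fun y : ℝ => Real.exp (-t * y ^ ν) * y ^ (a - 1))
      = fun y : ℝ => y ^ (a - 1) * Real.exp (-t * y ^ ν) from funext fun y => mul_comm _ _]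
  rw [h, neg_div]
  ring

lemma aux_int_integrable {ν a t : ℝ} (hν : 0 < ν) (ha : 0 < a) (ht : 0 < t) :
    IntegrableOn (fun y : ℝ => Real.exp (-t * y ^ ν) * y ^ (a - 1)) (Set.Ioi 0) := by
  by_contra h
  have hval := aux_int_val hν ha ht
  rw [integral_undef h] at hval
  have h1 : 0 < ν⁻¹ * Real.Gamma (a / ν) * t ^ (-(a / ν)) :=
    mul_pos (mul_pos (inv_pos.2 hν) (Real.Gamma_pos_of_pos (div_pos ha hν)))
      (Real.rpow_pos_of_pos ht _)
  linarith

lemma aux_gamma_int {a : ℝ} (ha : 0 < a) {s : ℝ} (hs : 0 < s) :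
    ∫ y in Set.Ioi (0:ℝ), y ^ (a - 1) * Real.exp (-s * y)
      = Real.Gamma a * s ^ (-a) := by
  have h := integral_rpow_mul_exp_neg_mul_rpow (p := 1) (q := a - 1) (b := s)
    one_pos (by linarith) hs
  simp only [Real.rpow_one] at h
  rw [show a - 1 + 1 = a by ring] at h
  rw [h]
  norm_num
  ring

lemma aux_gamma_integrable {a : ℝ} (ha : 0 < a) {s : ℝ} (hs : 0 < s) :
    IntegrableOn (fun y : ℝ => y ^ (a - 1) * Real.exp (-s * y)) (Set.Ioi 0) := by
  have := integrableOn_rpow_mul_exp_neg_mul_rpow (p := 1) (s := a - 1) (b := s)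
    (by linarith) one_pos hs
  simpa only [Real.rpow_one] using this

/-- Small-time bound via subordination: if `η_t` is the density of the `ν`-stable
subordinator (`0 < ν < 1`), i.e. `η_t ≥ 0`, `η_t(s) = 0` for `s ≤ 0` and
`∫_0^∞ e^{-us} η_t(s) ds = e^{-t u^ν}` for all `u ≥ 0`, then for `a, t > 0`:
`∫_0^1 s^{-a} η_t(s) ds ≤ Γ(a)⁻¹ ∫_0^∞ e^{-t y^ν} y^{a-1} dy`, the latter integral
equals `ν⁻¹ Γ(a/ν) t^{-a/ν}`, and hence
`∫_0^1 s^{-a} η_t(s) ds ≤ Γ(a/ν) (ν Γ(a))⁻¹ t^{-a/ν}`. -/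
theorem subordinator_small_time_bound (ν : ℝ) (hν₀ : 0 < ν) (hν₁ : ν < 1)
    (η : ℝ → ℝ → ℝ)
    (hnonneg : ∀ t s : ℝ, 0 < t → 0 ≤ η t s)
    (hzero : ∀ t s : ℝ, 0 < t → s ≤ 0 → η t s = 0)
    (hlaplace : ∀ t u : ℝ, 0 < t → 0 ≤ u →
      ∫ s in Set.Ioi (0 : ℝ), Real.exp (-u * s) * η t s = Real.exp (-t * u ^ ν))
    (a t : ℝ) (ha : 0 < a) (ht : 0 < t) :
    (∫ s in Set.Ioc (0 : ℝ) 1, s ^ (-a) * η t s) ≤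
        (Real.Gamma a)⁻¹ *
          ∫ y in Set.Ioi (0 : ℝ), Real.exp (-t * y ^ ν) * y ^ (a - 1) ∧
      (∫ y in Set.Ioi (0 : ℝ), Real.exp (-t * y ^ ν) * y ^ (a - 1)) =
        ν⁻¹ * Real.Gamma (a / ν) * t ^ (-(a / ν)) ∧
      (∫ s in Set.Ioc (0 : ℝ) 1, s ^ (-a) * η t s) ≤
        Real.Gamma (a / ν) * (ν * Real.Gamma a)⁻¹ * t ^ (-(a / ν)) := by
  have hΓ : 0 < Real.Gamma a := Real.Gamma_pos_of_pos ha
  set R : ℝ := ∫ y in Set.Ioi (0 : ℝ), Real.exp (-t * y ^ ν) * y ^ (a - 1) with hR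
  set I : ℝ := ∫ s in Set.Ioc (0 : ℝ) 1, s ^ (-a) * η t s with hI
  -- integrability of the Laplace integrand for each u ≥ 0
  have hintu : ∀ u : ℝ, 0 ≤ u →
      IntegrableOn (fun s => Real.exp (-u * s) * η t s) (Set.Ioi 0) := by
    intro u hu
    by_contra h
    have := hlaplace t u ht hu
    rw [integral_undef h] at this
    exact absurd this.symm (ne_of_gt (Real.exp_pos _))
  have hint0 : IntegrableOn (η t) (Set.Ioi 0) := by
    have := hintu 0 le_rfl
    simpa only [neg_zero, zero_mul, Real.exp_zero, one_mul] using this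
  have haem : AEMeasurable (η t) (volume.restrict (Set.Ioi (0:ℝ))) :=
    hint0.aestronglyMeasurable.aemeasurable
  have haem' : AEMeasurable (η t) (volume.restrict (Set.Ioc (0:ℝ) 1)) :=
    haem.mono_measure (Measure.restrict_mono Set.Ioc_subset_Ioi_self le_rfl)
  -- lintegral form of the Laplace transform
  have hL : ∀ u : ℝ, 0 ≤ u →
      ∫⁻ s in Set.Ioi (0:ℝ), ENNReal.ofReal (Real.exp (-u * s) * η t s)
        = ENNReal.ofReal (Real.exp (-t * u ^ ν)) := by
    intro u hu
    rw [← ofReal_integral_eq_lintegral_ofReal (hintu u hu)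
      (Filter.Eventually.of_forall fun s => mul_nonneg (Real.exp_pos _).le (hnonneg t s ht)),
      hlaplace t u ht hu]
  -- lintegral form of the Gamma identity
  have hGs : ∀ s : ℝ, 0 < s →
      (∫⁻ y in Set.Ioi (0:ℝ), ENNReal.ofReal (y ^ (a - 1) * Real.exp (-s * y)))
        = ENNReal.ofReal (Real.Gamma a * s ^ (-a)) := by
    intro s hs
    rw [← ofReal_integral_eq_lintegral_ofReal (aux_gamma_integrable ha hs)
      ((ae_restrict_iff' measurableSet_Ioi).2 (Filter.Eventually.of_forall fun y hy =>
        mul_nonneg (Real.rpow_nonneg (le_of_lt hy) _) (Real.exp_pos _).le)),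
      aux_gamma_int ha hs]
  set A : ENNReal := ∫⁻ s in Set.Ioc (0:ℝ) 1, ENNReal.ofReal (s ^ (-a) * η t s) with hA
  have step1 : ENNReal.ofReal (Real.Gamma a) * A
      = ∫⁻ s in Set.Ioc (0:ℝ) 1, ∫⁻ y in Set.Ioi (0:ℝ),
          ENNReal.ofReal (η t s) * ENNReal.ofReal (y ^ (a - 1) * Real.exp (-s * y)) := by
    rw [hA, ← lintegral_const_mul' _ _ ENNReal.ofReal_ne_top]
    refine setLIntegral_congr_fun measurableSet_Ioc (fun s hs => ?_)
    rw [lintegral_const_mul' _ _ ENNReal.ofReal_ne_top, hGs s hs.1,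
      ← ENNReal.ofReal_mul (hnonneg t s ht), ← ENNReal.ofReal_mul hΓ.le]
    congr 1
    ring
  -- Tonelli swap
  have hf : AEMeasurable
      (Function.uncurry fun s y : ℝ =>
        ENNReal.ofReal (η t s) * ENNReal.ofReal (y ^ (a - 1) * Real.exp (-s * y)))
      ((volume.restrict (Set.Ioc (0:ℝ) 1)).prod (volume.restrict (Set.Ioi (0:ℝ)))) := by
    refine AEMeasurable.mul (f := fun p : ℝ × ℝ => ENNReal.ofReal (η t p.1)) (g := fun p : ℝ × ℝ => ENNReal.ofReal (p.2 ^ (a - 1) * Real.exp (-p.1 * p.2))) ?_ ?_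
    · exact (ENNReal.measurable_ofReal.comp_aemeasurable
        (haem'.comp_quasiMeasurePreserving Measure.quasiMeasurePreserving_fst))
    · have : Measurable fun p : ℝ × ℝ =>
          ENNReal.ofReal (p.2 ^ (a - 1) * Real.exp (-p.1 * p.2)) := by fun_prop
      exact this.aemeasurable
  have hswap := lintegral_lintegral_swap hf
  -- inner bound in y
  have step3 : ∀ y : ℝ, y ∈ Set.Ioi (0:ℝ) →
      (∫⁻ s in Set.Ioc (0:ℝ) 1,
          ENNReal.ofReal (η t s) * ENNReal.ofReal (y ^ (a - 1) * Real.exp (-s * y)))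
        ≤ ENNReal.ofReal (Real.exp (-t * y ^ ν) * y ^ (a - 1)) := by
    intro y hy
    have hy' : (0:ℝ) < y := hy
    have hrw : ∀ s : ℝ, s ∈ Set.Ioc (0:ℝ) 1 →
        ENNReal.ofReal (η t s) * ENNReal.ofReal (y ^ (a - 1) * Real.exp (-s * y))
          = ENNReal.ofReal (Real.exp (-y * s) * η t s) * ENNReal.ofReal (y ^ (a - 1)) := by
      intro s hs
      rw [← ENNReal.ofReal_mul (hnonneg t s ht),
        ← ENNReal.ofReal_mul (mul_nonneg (Real.exp_pos _).le (hnonneg t s ht))]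
      congr 1
      ring
    calc (∫⁻ s in Set.Ioc (0:ℝ) 1,
            ENNReal.ofReal (η t s) * ENNReal.ofReal (y ^ (a - 1) * Real.exp (-s * y)))
        = ∫⁻ s in Set.Ioc (0:ℝ) 1,
            ENNReal.ofReal (Real.exp (-y * s) * η t s) * ENNReal.ofReal (y ^ (a - 1)) :=
          setLIntegral_congr_fun measurableSet_Ioc hrw
      _ = (∫⁻ s in Set.Ioc (0:ℝ) 1, ENNReal.ofReal (Real.exp (-y * s) * η t s))
            * ENNReal.ofReal (y ^ (a - 1)) :=
          lintegral_mul_const' _ _ ENNReal.ofReal_ne_top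
      _ ≤ (∫⁻ s in Set.Ioi (0:ℝ), ENNReal.ofReal (Real.exp (-y * s) * η t s))
            * ENNReal.ofReal (y ^ (a - 1)) :=
          mul_le_mul_left (lintegral_mono_set Set.Ioc_subset_Ioi_self) _
      _ = ENNReal.ofReal (Real.exp (-t * y ^ ν)) * ENNReal.ofReal (y ^ (a - 1)) := by
          rw [hL y hy'.le]
      _ = ENNReal.ofReal (Real.exp (-t * y ^ ν) * y ^ (a - 1)) :=
          (ENNReal.ofReal_mul (Real.exp_pos _).le).symm
  -- main lintegral bound
  have hbound : ENNReal.ofReal (Real.Gamma a) * A ≤ ENNReal.ofReal R := by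
    rw [step1, hswap]
    calc (∫⁻ y in Set.Ioi (0:ℝ), ∫⁻ s in Set.Ioc (0:ℝ) 1,
            ENNReal.ofReal (η t s) * ENNReal.ofReal (y ^ (a - 1) * Real.exp (-s * y)))
        ≤ ∫⁻ y in Set.Ioi (0:ℝ), ENNReal.ofReal (Real.exp (-t * y ^ ν) * y ^ (a - 1)) :=
          setLIntegral_mono_ae (by fun_prop)
            (Filter.Eventually.of_forall step3)
      _ = ENNReal.ofReal R :=
          (ofReal_integral_eq_lintegral_ofReal (aux_int_integrable hν₀ ha ht)
            ((ae_restrict_iff' measurableSet_Ioi).2 (Filter.Eventually.of_forall fun y hy =>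
              mul_nonneg (Real.exp_pos _).le (Real.rpow_nonneg (le_of_lt hy) _)))).symm
  -- relate I to A
  have hIA : I = A.toReal := by
    rw [hI, hA]
    exact integral_eq_lintegral_of_nonneg_ae
      ((ae_restrict_iff' measurableSet_Ioc).2 (Filter.Eventually.of_forall fun s hs =>
        mul_nonneg (Real.rpow_nonneg hs.1.le _) (hnonneg t s ht)))
      ((((by fun_prop : Measurable fun s : ℝ => s ^ (-a)).aemeasurable).mul haem').aestronglyMeasurable)
  have hRnonneg : 0 ≤ R :=
    setIntegral_nonneg measurableSet_Ioi fun y hy =>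
      mul_nonneg (Real.exp_pos _).le (Real.rpow_nonneg (le_of_lt hy) _)
  have hΓI : Real.Gamma a * I ≤ R := by
    have h1 := ENNReal.toReal_mono ENNReal.ofReal_ne_top hbound
    rw [ENNReal.toReal_mul, ENNReal.toReal_ofReal hΓ.le, ENNReal.toReal_ofReal hRnonneg] at h1
    rw [hIA]
    exact h1
  have hfirst : I ≤ (Real.Gamma a)⁻¹ * R := by
    calc I = (Real.Gamma a)⁻¹ * (Real.Gamma a * I) := by field_simp
      _ ≤ (Real.Gamma a)⁻¹ * R := mul_le_mul_of_nonneg_left hΓI (inv_nonneg.2 hΓ.le)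
  have hsecond : R = ν⁻¹ * Real.Gamma (a / ν) * t ^ (-(a / ν)) := aux_int_val hν₀ ha ht
  refine ⟨hfirst, hsecond, ?_⟩
  calc I ≤ (Real.Gamma a)⁻¹ * R := hfirst
    _ = Real.Gamma (a / ν) * (ν * Real.Gamma a)⁻¹ * t ^ (-(a / ν)) := by
        rw [hsecond, mul_inv]
        ring
end
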